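/- Let N be a workflow net and let S(N) = {k ≥ 1 : N is k-sound}. There exist p > 0 and k ∈ N ∪ {+∞} such that S(N) = {i·p : 1 ≤ i < k}. In particular, if S(N) is nonempty, it consists of all positive multiples of its minimum element p that are strictly less than p·k. -/

import Mathlib

/-- A Petri net over places `P` and transitions `T`, given by pre/post arc weights. -/
structure PetriNet (P T : Type) where
  pre : T → P → ℕ
  post : T → P → ℕ

namespace PetriNet

variable {P T : Type}

/-- Transition `t` is enabled in marking `m`. -/
def Enabled (N : PetriNet P T) (m : P → ℕ) (t : T) : Prop := ∀ p, N.pre t p ≤ m p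

/-- Firing transition `t` in `m` yields `m'`. -/
def Fire (N : PetriNet P T) (m : P → ℕ) (t : T) (m' : P → ℕ) : Prop :=
  N.Enabled m t ∧ ∀ p, m' p = m p - N.pre t p + N.post t p

def Step (N : PetriNet P T) (m m' : P → ℕ) : Prop := ∃ t, N.Fire m t m'

/-- Reachability `m →* m'`. -/
def Reach (N : PetriNet P T) : (P → ℕ) → (P → ℕ) → Prop := Relation.ReflTransGen N.Step

/-- Effect of a transition, as an integer vector. -/
def eff (N : PetriNet P T) (t : T) (p : P) : ℤ := (N.post t p : ℤ) - (N.pre t p : ℤ)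

def ZStep (N : PetriNet P T) (m m' : P → ℤ) : Prop := ∃ t, ∀ p, m' p = m p + N.eff t p

/-- Z-reachability: no enabledness constraint, markings range over ℤ. -/
def ZReach (N : PetriNet P T) : (P → ℤ) → (P → ℤ) → Prop := Relation.ReflTransGen N.ZStep

/-- Maximal arc weight `‖T‖`. -/
def maxW (N : PetriNet P T) [Fintype P] [Fintype T] : ℕ :=
  Finset.univ.sup fun t => Finset.univ.sup fun p => max (N.pre t p) (N.post t p)

/-- Edge relation of the underlying graph, on `P ⊕ T`. -/
def Edge (N : PetriNet P T) : (P ⊕ T) → (P ⊕ T) → Prop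
  | Sum.inl p, Sum.inr t => 0 < N.pre t p
  | Sum.inr t, Sum.inl p => 0 < N.post t p
  | _, _ => False

/-- `N` is bounded from marking `m`. -/
def BoundedFrom (N : PetriNet P T) (m : P → ℕ) : Prop :=
  ∃ b : ℕ, ∀ m', N.Reach m m' → ∀ p, m' p ≤ b

/-- `N` is cyclic from marking `m`. -/
def CyclicFrom (N : PetriNet P T) (m : P → ℕ) : Prop :=
  ∀ m', N.Reach m m' → N.Reach m' m

/-- Transition `t` is quasi-live from `m`. -/
def QuasiLiveT (N : PetriNet P T) (m : P → ℕ) (t : T) : Prop :=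
  ∃ m', N.Reach m m' ∧ N.Enabled m' t

/-- `N` is quasi-live from `m`. -/
def QuasiLiveFrom (N : PetriNet P T) (m : P → ℕ) : Prop :=
  ∀ t, N.QuasiLiveT m t

/-- Transition `t` is live from `m`. -/
def LiveT (N : PetriNet P T) (m : P → ℕ) (t : T) : Prop :=
  ∀ m', N.Reach m m' → N.QuasiLiveT m' t

end PetriNet

/-- A workflow net: a Petri net with initial place `ini`, final place `fin`,
no production into `ini`, no consumption from `fin`, and every node on a path
from `ini` to `fin` in the underlying graph. -/
structure WorkflowNet (P T : Type) extends PetriNet P T where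
  ini : P
  fin : P
  ini_ne_fin : ini ≠ fin
  no_prod_ini : ∀ t, post t ini = 0
  no_cons_fin : ∀ t, pre t fin = 0
  on_path : ∀ v : P ⊕ T,
    Relation.ReflTransGen toPetriNet.Edge (Sum.inl ini) v ∧
    Relation.ReflTransGen toPetriNet.Edge v (Sum.inl fin)

namespace WorkflowNet

variable {P T : Type}

/-- The marking `{i : k}`. -/
def iniM [DecidableEq P] (N : WorkflowNet P T) (k : ℕ) : P → ℕ :=
  fun p => if p = N.ini then k else 0

/-- The marking `{f : k}`. -/
def finM [DecidableEq P] (N : WorkflowNet P T) (k : ℕ) : P → ℕ :=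
  fun p => if p = N.fin then k else 0

/-- `N` is `k`-sound. -/
def KSound [DecidableEq P] (N : WorkflowNet P T) (k : ℕ) : Prop :=
  ∀ m, N.toPetriNet.Reach (N.iniM k) m → N.toPetriNet.Reach m (N.finM k)

/-- `N` is generalised sound. -/
def GeneralisedSound [DecidableEq P] (N : WorkflowNet P T) : Prop :=
  ∀ k : ℕ, 1 ≤ k → N.KSound k

/-- `N` is structurally sound. -/
def StructurallySound [DecidableEq P] (N : WorkflowNet P T) : Prop :=
  ∃ k : ℕ, 1 ≤ k ∧ N.KSound k

/-- All places of `N` are nonredundant. -/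
def Nonredundant [DecidableEq P] (N : WorkflowNet P T) : Prop :=
  ∀ p : P, ∃ (k : ℕ) (m : P → ℕ), N.toPetriNet.Reach (N.iniM k) m ∧ 0 < m p

/-- `N` is strongly `k`-sound. -/
def StronglyKSound [DecidableEq P] (N : WorkflowNet P T) (k : ℕ) : Prop :=
  ∀ m : P → ℕ,
    N.toPetriNet.ZReach (fun p => ((N.iniM k) p : ℤ)) (fun p => (m p : ℤ)) →
    N.toPetriNet.Reach m (N.finM k)

end WorkflowNet

/-!
Soundness numbers are closed under cancellation: if `N` is `(a + b)`-sound and `b`-sound, then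
it is `a`-sound. Indeed, a marking `m` reachable from `a` tokens in `i` becomes `m + {i : b}`
reachable from `a + b` tokens; running the `b`-sound behaviour on top of `m` leads to
`m + {f : b}`, which by `(a + b)`-soundness reaches `{f : a + b}`; and since no transition
consumes from `f`, the `b` final tokens are inert and can be stripped off.

Any set of naturals closed under cancellation is, on the positive numbers, an initial segment
of the multiples of its least positive element `p`: `m % p` survives by repeatedly cancelling
`p`, hence vanishes by minimality, and cancelling from `i * p` gives every smaller multiple.
-/

namespace PetriNet

variable {P T : Type} (N : PetriNet P T)

theorem Step.add_right {m m' : P → ℕ} (h : N.Step m m') (x : P → ℕ) :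
    N.Step (m + x) (m' + x) := by
  obtain ⟨t, hen, hfire⟩ := h
  refine ⟨t, fun p => (hen p).trans (Nat.le_add_right _ _), fun p => ?_⟩
  have hfire_p := hfire p
  have hen_p := hen p
  simp only [Pi.add_apply]
  omega

theorem Reach.add_right {m m' : P → ℕ} (h : N.Reach m m') (x : P → ℕ) :
    N.Reach (m + x) (m' + x) :=
  Relation.ReflTransGen.lift (· + x) (fun _ _ hs => hs.add_right N x) _ _ h

theorem Reach.add_left {m m' : P → ℕ} (h : N.Reach m m') (x : P → ℕ) :
    N.Reach (x + m) (x + m') := by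
  simpa only [add_comm x] using h.add_right N x

section Inert

variable {x : P → ℕ} (hx : ∀ t p, x p ≠ 0 → N.pre t p = 0)
include hx

theorem Step.exists_of_add_inert {m m'' : P → ℕ} (h : N.Step (m + x) m'') :
    ∃ m', m'' = m' + x ∧ N.Step m m' := by
  obtain ⟨t, hen, hfire⟩ := h
  have hen' : N.Enabled m t := fun p => by
    by_cases hp : x p = 0
    · simpa [hp] using hen p
    · simp [hx t p hp]
  refine ⟨fun p => m p - N.pre t p + N.post t p, funext fun p => ?_, t, hen', fun _ => rfl⟩
  have hfire_p := hfire p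
  have hen_p := hen' p
  simp only [Pi.add_apply] at hfire_p ⊢
  by_cases hp : x p = 0
  · omega
  · have := hx t p hp
    omega

theorem Reach.exists_of_add_inert {m m'' : P → ℕ} (h : N.Reach (m + x) m'') :
    ∃ m', m'' = m' + x ∧ N.Reach m m' := by
  induction h with
  | refl => exact ⟨m, rfl, .refl⟩
  | tail _ hstep ih =>
    obtain ⟨m', rfl, hreach⟩ := ih
    obtain ⟨m'', rfl, hstep'⟩ := hstep.exists_of_add_inert N hx
    exact ⟨m'', rfl, hreach.tail hstep'⟩

end Inert

end PetriNet

namespace WorkflowNet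

variable {P T : Type} [DecidableEq P] (N : WorkflowNet P T)

theorem iniM_add (a b : ℕ) : N.iniM (a + b) = N.iniM a + N.iniM b := by
  ext p
  simp only [iniM, Pi.add_apply]
  split_ifs <;> rfl

theorem finM_add (a b : ℕ) : N.finM (a + b) = N.finM a + N.finM b := by
  ext p
  simp only [finM, Pi.add_apply]
  split_ifs <;> rfl

theorem pre_eq_zero_of_finM_ne_zero {b : ℕ} (t : T) {p : P} (hp : N.finM b p ≠ 0) :
    N.pre t p = 0 := by
  by_cases hpf : p = N.fin
  · exact hpf ▸ N.no_cons_fin t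
  · simp [finM, hpf] at hp

theorem KSound.of_add {N : WorkflowNet P T} {a b : ℕ} (hab : N.KSound (a + b))
    (hb : N.KSound b) : N.KSound a := by
  intro m hm
  have hstart : N.Reach (N.iniM (a + b)) (m + N.iniM b) := by
    rw [iniM_add]
    exact hm.add_right _ _
  have hrun : N.Reach (m + N.iniM b) (m + N.finM b) :=
    (hb _ .refl).add_left _ m
  have hend : N.Reach (m + N.finM b) (N.finM a + N.finM b) := by
    rw [← finM_add]
    exact hab _ (hstart.trans hrun)
  obtain ⟨m', hm', hreach⟩ :=
    hend.exists_of_add_inert _ fun t _ hp => N.pre_eq_zero_of_finM_ne_zero t hp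
  rwa [add_right_cancel hm']

end WorkflowNet

theorem IsLowerSet.exists_enat_iff_lt {s : Set ℕ} (hs : IsLowerSet s) :
    ∃ k : ℕ∞, ∀ i : ℕ, i ∈ s ↔ (i : ℕ∞) < k := by
  rcases hs.eq_univ_or_Iio with rfl | ⟨a, rfl⟩
  · exact ⟨⊤, by simp⟩
  · exact ⟨a, by simp⟩

section CancellationClosed

variable {S : ℕ → Prop} (hS : ∀ a b, S (a + b) → S b → S a)
include hS

theorem of_add_mul_of_cancel_closed {a p : ℕ} (hp : S p) (l : ℕ) (h : S (a + l * p)) : S a := by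
  induction l with
  | zero => simpa using h
  | succ l ih => exact ih (hS _ p (by rwa [add_mul, one_mul, ← add_assoc] at h) hp)

theorem exists_mul_iff_of_cancel_closed :
    ∃ (p : ℕ) (k : ℕ∞), 0 < p ∧
      ∀ m : ℕ, 1 ≤ m → (S m ↔ ∃ i : ℕ, 1 ≤ i ∧ (i : ℕ∞) < k ∧ m = i * p) := by
  classical
  by_cases hne : ∃ p, 0 < p ∧ S p
  swap
  · refine ⟨1, 1, one_pos, fun m hm => ⟨fun hSm => absurd ⟨m, hm, hSm⟩ hne, ?_⟩⟩
    rintro ⟨i, hi, hik, -⟩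
    have : i < 1 := by exact_mod_cast hik
    omega
  obtain ⟨hp0, hp⟩ := Nat.find_spec hne
  set p := Nat.find hne
  have hdvd : ∀ m, S m → p ∣ m := fun m hm => by
    have hmod : S (m % p) :=
      of_add_mul_of_cancel_closed hS hp (m / p) (by rwa [Nat.mod_add_div'])
    by_contra hndvd
    exact Nat.find_min hne (Nat.mod_lt m hp0)
      ⟨Nat.pos_of_ne_zero (mt Nat.dvd_of_mod_eq_zero hndvd), hmod⟩
  have hlower : IsLowerSet {i | S (i * p)} := fun i j hji hi => by
    obtain ⟨d, rfl⟩ := Nat.exists_eq_add_of_le hji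
    exact of_add_mul_of_cancel_closed hS hp d (by rwa [← add_mul])
  obtain ⟨k, hk⟩ := hlower.exists_enat_iff_lt
  refine ⟨p, k, hp0, fun m hm => ⟨fun hSm => ?_, ?_⟩⟩
  · obtain ⟨i, rfl⟩ := hdvd m hSm
    refine ⟨i, Nat.pos_of_ne_zero (by rintro rfl; omega), (hk i).mp ?_, mul_comm p i⟩
    rwa [mul_comm] at hSm
  · rintro ⟨i, -, hik, rfl⟩
    exact (hk i).mpr hik

end CancellationClosed

/-- The set of sound numbers is `{i·p : 1 ≤ i < k}` for some `p > 0` and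
`k ∈ ℕ ∪ {+∞}`. -/
theorem sound_numbers_shape {P T : Type} [DecidableEq P] (N : WorkflowNet P T) :
    ∃ (p : ℕ) (k : ℕ∞), 0 < p ∧
      ∀ m : ℕ, 1 ≤ m →
        (N.KSound m ↔ ∃ i : ℕ, 1 ≤ i ∧ (i : ℕ∞) < k ∧ m = i * p) :=
  exists_mul_iff_of_cancel_closed fun _ _ => WorkflowNet.KSound.of_add
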